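/- In K_{3,1,1,1,1,1} with parts {a,b,c}, {1},…,{5}, any fixed 8-cycle (Hamiltonian cycle) can be contained in at most two of the five canonical H₈-subgraphs (one for each choice of top vertex among 1,…,5, with middle vertices a, b, c): if it were contained in three, there would be three distinct vertices among 1,…,5 each adjacent along the cycle to two of a, b, c, forcing a closed subwalk of length 6, contradicting that the cycle has length 8. -/

import Mathlib

open SimpleGraph

/-- The graph `H₈`, obtained from `K₇` by a triangle-Y move: vertex `0` is the
top vertex, `1,2,3` the middle vertices, `4,5,6,7` the bottom vertices. -/
def H8 : SimpleGraph (Fin 8) where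
  Adj u v := u ≠ v ∧
    ((![0, 1, 1, 1, 2, 2, 2, 2] u = (0 : Fin 3) ∧ ![0, 1, 1, 1, 2, 2, 2, 2] v = (1 : Fin 3)) ∨
     (![0, 1, 1, 1, 2, 2, 2, 2] u = (1 : Fin 3) ∧ ![0, 1, 1, 1, 2, 2, 2, 2] v = (0 : Fin 3)) ∨
     (![0, 1, 1, 1, 2, 2, 2, 2] u = (1 : Fin 3) ∧ ![0, 1, 1, 1, 2, 2, 2, 2] v = (2 : Fin 3)) ∨
     (![0, 1, 1, 1, 2, 2, 2, 2] u = (2 : Fin 3) ∧ ![0, 1, 1, 1, 2, 2, 2, 2] v = (1 : Fin 3)) ∨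
     (![0, 1, 1, 1, 2, 2, 2, 2] u = (2 : Fin 3) ∧ ![0, 1, 1, 1, 2, 2, 2, 2] v = (2 : Fin 3)))
  symm := ⟨by intro u v h; exact ⟨h.1.symm, by tauto⟩⟩
  loopless := ⟨by intro v h; exact h.1 rfl⟩

/-- The vertex type of `K_{3,1,1,1,1,1}` with parts `{a,b,c}, {1},…,{5}`. -/
abbrev V311111 := Σ i, ![Fin 3, Fin 1, Fin 1, Fin 1, Fin 1, Fin 1] i

/-- The vertex of the `i`-th singleton part of `K_{3,1,1,1,1,1}`. -/
def sing5 : Fin 5 → V311111 :=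
  ![⟨1, (0 : Fin 1)⟩, ⟨2, (0 : Fin 1)⟩, ⟨3, (0 : Fin 1)⟩, ⟨4, (0 : Fin 1)⟩,
    ⟨5, (0 : Fin 1)⟩]

/-! If three top vertices qualify, the cycle's neighbours of each of them lie in `{a, b, c}`.
The cycle is a spanning 2-regular subgraph, so double counting the six edges between these tops and
`{a, b, c}` shows that they are all the cycle edges at `a, b, c`. The two remaining vertices are
then closed under cycle adjacency, whereas a nonempty set closed under adjacency in a 2-regular
graph has at least three vertices. -/

-- Instance search does not reduce `![…] i`, so each part gets its instances case by case.
instance : ∀ i : Fin 6, DecidableEq (![Fin 3, Fin 1, Fin 1, Fin 1, Fin 1, Fin 1] i)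
  | 0 | 1 | 2 | 3 | 4 | 5 => instDecidableEqFin _

instance : ∀ i : Fin 6, Fintype (![Fin 3, Fin 1, Fin 1, Fin 1, Fin 1, Fin 1] i)
  | 0 | 1 | 2 | 3 | 4 | 5 => Fin.fintype _

namespace SimpleGraph

variable {V : Type*} [Fintype V] {H : SimpleGraph V} [DecidableRel H.Adj] {d : ℕ}

lemma IsRegularOfDegree.neighborFinset_subset_of_card_le (hH : H.IsRegularOfDegree d)
    {T M : Finset V} (hMT : M.card ≤ T.card) (hT : ∀ t ∈ T, H.neighborFinset t ⊆ M)
    {m : V} (hm : m ∈ M) : H.neighborFinset m ⊆ T := by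
  have hbelow : ∀ x ∈ M, T.bipartiteBelow H.Adj x ⊆ H.neighborFinset x := fun x _ y hy => by
    simpa [H.adj_comm] using (Finset.mem_bipartiteBelow _).mp hy |>.2
  have habove : ∀ t ∈ T, M.bipartiteAbove H.Adj t = H.neighborFinset t := fun t ht => by
    ext y
    simp only [Finset.mem_bipartiteAbove, mem_neighborFinset, and_iff_right_iff_imp]
    exact fun hy => hT t ht ((H.mem_neighborFinset t y).mpr hy)
  have hle : ∀ x ∈ M, (T.bipartiteBelow H.Adj x).card ≤ d := fun x hx =>
    hH x ▸ Finset.card_le_card (hbelow x hx)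
  have hsum : ∑ x ∈ M, (T.bipartiteBelow H.Adj x).card = ∑ _x ∈ M, d := by
    refine le_antisymm (Finset.sum_le_sum hle) ?_
    calc ∑ _x ∈ M, d = M.card * d := by simp
      _ ≤ T.card * d := Nat.mul_le_mul_right d hMT
      _ = ∑ t ∈ T, (M.bipartiteAbove H.Adj t).card := by
          rw [Finset.sum_congr rfl fun t ht => by
            rw [habove t ht, card_neighborFinset_eq_degree, hH t]]
          simp
      _ = ∑ x ∈ M, (T.bipartiteBelow H.Adj x).card :=
          Finset.sum_card_bipartiteAbove_eq_sum_card_bipartiteBelow _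
  have hcard := (Finset.sum_eq_sum_iff_of_le hle).mp hsum m hm
  have hm_below : T.bipartiteBelow H.Adj m = H.neighborFinset m :=
    Finset.eq_of_subset_of_card_le (hbelow m hm)
      (by rw [hcard, card_neighborFinset_eq_degree, hH m])
  exact hm_below ▸ Finset.filter_subset _ _

lemma IsRegularOfDegree.add_one_le_card (hH : H.IsRegularOfDegree d) {S : Finset V}
    (hS : ∀ x ∈ S, H.neighborFinset x ⊆ S) {x : V} (hx : x ∈ S) : d + 1 ≤ S.card := by
  classical
  calc d + 1 = (insert x (H.neighborFinset x)).card := by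
        rw [Finset.card_insert_of_notMem (by simp), card_neighborFinset_eq_degree, hH x]
    _ ≤ S.card := Finset.card_le_card (Finset.insert_subset hx (hS x hx))

lemma IsRegularOfDegree.neighborFinset_subset_compl_union (hH : H.IsRegularOfDegree d)
    [DecidableEq V] {T M : Finset V} (hMT : M.card ≤ T.card)
    (hT : ∀ t ∈ T, H.neighborFinset t ⊆ M) {x : V} (hx : x ∈ (T ∪ M)ᶜ) :
    H.neighborFinset x ⊆ (T ∪ M)ᶜ := by
  intro y hy
  rw [mem_neighborFinset] at hy
  simp only [Finset.mem_compl, Finset.mem_union, not_or] at hx ⊢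
  constructor
  · exact fun hyT => hx.2 (hT y hyT ((H.mem_neighborFinset _ _).mpr hy.symm))
  · exact fun hyM => hx.1 (hH.neighborFinset_subset_of_card_le hMT hT hyM
      ((H.mem_neighborFinset _ _).mpr hy.symm))

lemma Walk.IsHamiltonianCycle.isRegularOfDegree_two [DecidableEq V] {G : SimpleGraph V} {u : V}
    {p : G.Walk u u} (hp : p.IsHamiltonianCycle) [DecidableRel p.toSubgraph.spanningCoe.Adj] :
    p.toSubgraph.spanningCoe.IsRegularOfDegree 2 := fun v => by
  classical
  rw [Subgraph.degree_spanningCoe, Subgraph.degree, ← Nat.card_eq_fintype_card,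
    Nat.card_coe_set_eq, hp.isCycle.ncard_neighborSet_toSubgraph_eq_two (hp.mem_support v)]

end SimpleGraph

instance : DecidableRel H8.Adj := fun _ _ => inferInstanceAs (Decidable (_ ∧ _))

lemma H8.mem_middle_of_top_mem_map {W : Type*} {f : Fin 8 → W} (hf : Function.Injective f)
    {e : Sym2 (Fin 8)} (he : e ∈ H8.edgeSet) {w : W} (hw : s(f 0, w) = e.map f) :
    w ∈ ({f 1, f 2, f 3} : Set W) := by
  induction e using Sym2.ind with
  | h x y =>
  have top_adj : ∀ y, H8.Adj 0 y → y = 1 ∨ y = 2 ∨ y = 3 := by decide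
  rw [Sym2.map_mk, Sym2.eq_iff] at hw
  rcases hw with ⟨hx, rfl⟩ | ⟨hy, rfl⟩
  · obtain rfl := hf hx
    rcases top_adj y he with rfl | rfl | rfl <;> simp
  · obtain rfl := hf hy
    rcases top_adj x (H8.adj_symm he) with rfl | rfl | rfl <;> simp

lemma SimpleGraph.Walk.mem_middle_of_toSubgraph_adj_top {W : Type*} {G : SimpleGraph W}
    {u : W} {p : G.Walk u u} {f : Fin 8 → W} (hf : Function.Injective f)
    (hp : ∀ e ∈ p.edges, ∃ e' ∈ H8.edgeSet, e = Sym2.map f e') {w : W}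
    (hw : p.toSubgraph.Adj (f 0) w) : w ∈ ({f 1, f 2, f 3} : Set W) := by
  obtain ⟨e, he, hew⟩ := hp _ (Walk.adj_toSubgraph_iff_mem_edges.mp hw)
  exact H8.mem_middle_of_top_mem_map hf he hew

lemma sing5_injective : Function.Injective sing5 := by decide

/-- In `K_{3,1,1,1,1,1}`, any fixed Hamiltonian (8-)cycle is contained in at
most two of the five canonical `H₈`-subgraphs, where the canonical
`H₈`-subgraph with top vertex the `i`-th singleton has middle vertices `a,b,c`
(the part of size 3) and the remaining four singletons as bottom vertices. -/
theorem stmt_17 :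
    let G := completeMultipartiteGraph ![Fin 3, Fin 1, Fin 1, Fin 1, Fin 1, Fin 1]
    ∀ (v : V311111) (c : G.Walk v v), c.IsCycle → c.length = 8 →
      Nat.card {i : Fin 5 //
        ∃ f : H8 →g G, Function.Injective f ∧
          f 0 = sing5 i ∧
          ({f 1, f 2, f 3} : Set V311111) = {w : V311111 | w.1 = 0} ∧
          ∀ e ∈ c.edges, ∃ e' ∈ H8.edgeSet, e = Sym2.map f e'} ≤ 2 := by
  intro G v c hc hlen
  classical
  have hreg := (Walk.isHamiltonianCycle_iff_isCycle_and_length_eq.mpr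
    ⟨hc, by rw [hlen]; decide⟩).isRegularOfDegree_two
  by_contra! hcard
  rw [Nat.card_eq_fintype_card, Fintype.card_subtype] at hcard
  obtain ⟨I, hI, hIcard⟩ := Finset.exists_subset_card_eq hcard
  set T := I.image sing5
  set M : Finset V311111 := {w | w.1 = 0}
  have hTcard : T.card = 3 := by rw [Finset.card_image_of_injective _ sing5_injective, hIcard]
  have hMcard : M.card = 3 := by decide
  have hTM : Disjoint T M := by
    simp only [T, M, Finset.disjoint_left, Finset.mem_image, Finset.mem_filter]
    rintro _ ⟨i, -, rfl⟩
    revert i; decide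
  have hT : ∀ t ∈ T, c.toSubgraph.spanningCoe.neighborFinset t ⊆ M := by
    simp only [T, Finset.forall_mem_image]
    intro i hi w hw
    obtain ⟨f, hf, hf0, hmid, hcover⟩ := (Finset.mem_filter.mp (hI hi)).2
    rw [← hf0, mem_neighborFinset] at hw
    have hw_mid := c.mem_middle_of_toSubgraph_adj_top hf hcover hw
    rw [hmid] at hw_mid
    simpa [M] using hw_mid
  have hcompl : (T ∪ M)ᶜ.card = 2 := by
    rw [Finset.card_compl, Finset.card_union_of_disjoint hTM, hTcard, hMcard]; rfl
  obtain ⟨x, hx⟩ := Finset.card_pos.mp (by omega : 0 < (T ∪ M)ᶜ.card)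
  have hcompl_large : 2 + 1 ≤ (T ∪ M)ᶜ.card := hreg.add_one_le_card
    (fun y hy => hreg.neighborFinset_subset_compl_union (by omega) hT hy) hx
  omega
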